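/- arXiv:1905.03531 — 5 statements merged into one kernel-verified Lean document; each statement's English description precedes it below -/
import Mathlib

section
/- Let a, b, δ, f, m, v be real numbers with b > 0, a + bδ > 0, f > 0, m ≥ 0, v > 0, and suppose 2·m·f + δ·f² ≥ 1/v and ((a + bδ)·f + b·m)² = b·(2a + δb)·(1/v). Then a·f = b·m and 2·m·f + δ·f² = 1/v. -/
/-
Expanding the square gives the identity
  ((a + bδ)f + bm)² = (af - bm)² + b(2a + δb)(2mf + δf²).
The hypothesis forces b(2a + δb) > 0, so with 2mf + δf² ≥ 1/v the identity reads
  (af - bm)² = b(2a + δb)(1/v - (2mf + δf²)) ≤ 0,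
and both sides must vanish.
-/

theorem sq_add_mul_add_mul_eq (a b δ f m : ℝ) :
    ((a + b*δ)*f + b*m)^2 = (a*f - b*m)^2 + b*(2*a + δ*b) * (2*m*f + δ*f^2) := by
  ring

theorem eq_zero_and_eq_of_sq_add_mul_eq {R : Type*} [Field R] [LinearOrder R]
    [IsStrictOrderedRing R] {x c y w : R} (hc : 0 < c) (hyw : w ≤ y)
    (h : x^2 + c*y = c*w) : x = 0 ∧ y = w := by
  have hcy : c*w ≤ c*y := mul_le_mul_of_nonneg_left hyw hc.le
  have hx : x^2 = 0 := le_antisymm (by linarith) (sq_nonneg x)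
  refine ⟨pow_eq_zero_iff two_ne_zero |>.mp hx, ?_⟩
  rw [hx, zero_add] at h
  exact mul_left_cancel₀ hc.ne' h

theorem stmt_1 (a b δ f m v : ℝ) (hb : 0 < b) (habδ : 0 < a + b*δ)
    (hf : 0 < f) (hm : 0 ≤ m) (hv : 0 < v)
    (h1 : 2*m*f + δ*f^2 ≥ 1/v)
    (h2 : ((a + b*δ)*f + b*m)^2 = b*(2*a + δ*b) * (1/v)) :
    a*f = b*m ∧ 2*m*f + δ*f^2 = 1/v := by
  have hpos : 0 < ((a + b*δ)*f + b*m)^2 := by positivity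
  have hc : 0 < b*(2*a + δ*b) := pos_of_mul_pos_left (h2 ▸ hpos) (by positivity)
  rw [sq_add_mul_add_mul_eq] at h2
  obtain ⟨hdiff, heq⟩ := eq_zero_and_eq_of_sq_add_mul_eq hc h1 h2
  exact ⟨sub_eq_zero.mp hdiff, heq⟩
end

section
/- Let δ > 0, f > 0, m₁ > δf be real numbers and define q₁ : (−δ, ∞) → ℝ by q₁(x) = (f·x + m₁)²/(((1/δ)x + 1)²·δ) for x ∈ (−δ, 0) and q₁(x) = (f·x + m₁)²/(2x + δ) for x ∈ [0, ∞). Then for all x in (−δ, ∞), q₁(x) ≥ 2m₁f − δf². -/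
theorem stmt_4 (δ f m₁ : ℝ) (q₁ : ℝ → ℝ) (hδ : 0 < δ) (hf : 0 < f) (hm : δ*f < m₁)
    (hq1 : ∀ x, -δ < x → x < 0 → q₁ x = (f*x + m₁)^2 / (((1/δ)*x + 1)^2 * δ))
    (hq2 : ∀ x, 0 ≤ x → q₁ x = (f*x + m₁)^2 / (2*x + δ)) :
    ∀ x, -δ < x → q₁ x ≥ 2*m₁*f - δ*f^2 := by
  intro x hx
  have hc : 0 < m₁ - δ*f := by linarith
  rcases lt_or_ge x 0 with h | h
  · rw [hq1 x hx h]
    have hs : 0 < x + δ := by linarith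
    have hden : ((1/δ)*x + 1)^2 * δ = (x+δ)^2/δ := by
      field_simp
    rw [hden, div_div_eq_mul_div]
    rw [ge_iff_le, le_div_iff₀ (by positivity)]
    nlinarith [mul_pos (mul_pos (mul_pos hf hc) hs) (by linarith : (0:ℝ) < -x),
      mul_pos hδ (mul_pos hc hc)]
  · rw [hq2 x h]
    rw [ge_iff_le, le_div_iff₀ (by linarith)]
    nlinarith [sq_nonneg (f*x - m₁ + δ*f)]
end

section
/- Let a, b, δ, f, m, β be real numbers with b > 0, δ ≥ 0, f > 0, m > 0, β > 0, and suppose 2mf + δf² ≥ β. Set θ = af − bm and suppose θ < 0 and a ≥ 0. Then 0 ≤ aβ/m ≤ (a + bδ)f + bm and 0 ≤ ((a + bδ)β − θm)/(m + δf) ≤ (a + bδ)f + bm. -/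
/-!
Write `μ = (a + bδ)f + bm` and `θ = af - bm`. Both upper bounds follow from `β ≤ 2mf + δf²` and
the polynomial identities `μ m = a(2mf + δf²) - θ(m + δf)` and
`μ (m + δf) = (a + bδ)(2mf + δf²) - θ m`; the sign conditions `a ≥ 0`, `θ < 0` then do the rest.
-/

section

variable {a b δ f m β : ℝ}

theorem muHat_mul_eq (a b δ f m : ℝ) :
    ((a + b*δ)*f + b*m) * m = a*(2*m*f + δ*f^2) - (a*f - b*m)*(m + δ*f) := by
  ring

theorem muHat_mul_add_eq (a b δ f m : ℝ) :
    ((a + b*δ)*f + b*m) * (m + δ*f) = (a + b*δ)*(2*m*f + δ*f^2) - (a*f - b*m)*m := by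
  ring

theorem mul_div_le_of_sub_nonpos (ha : 0 ≤ a) (hm : 0 < m) (hmδf : 0 ≤ m + δ*f)
    (hθ : a*f - b*m ≤ 0) (hβ : β ≤ 2*m*f + δ*f^2) :
    a*β/m ≤ (a + b*δ)*f + b*m := by
  rw [div_le_iff₀ hm, muHat_mul_eq]
  calc a*β ≤ a*(2*m*f + δ*f^2) := mul_le_mul_of_nonneg_left hβ ha
    _ ≤ a*(2*m*f + δ*f^2) - (a*f - b*m)*(m + δ*f) :=
      le_sub_self_iff _ |>.mpr (mul_nonpos_of_nonpos_of_nonneg hθ hmδf)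

theorem div_le_of_nonneg_coeff (hab : 0 ≤ a + b*δ) (hmδf : 0 < m + δ*f)
    (hβ : β ≤ 2*m*f + δ*f^2) :
    ((a + b*δ)*β - (a*f - b*m)*m)/(m + δ*f) ≤ (a + b*δ)*f + b*m := by
  rw [div_le_iff₀ hmδf, muHat_mul_add_eq]
  gcongr

theorem div_nonneg_of_sub_nonpos (hab : 0 ≤ a + b*δ) (hβ : 0 ≤ β) (hm : 0 ≤ m)
    (hmδf : 0 ≤ m + δ*f) (hθ : a*f - b*m ≤ 0) :
    0 ≤ ((a + b*δ)*β - (a*f - b*m)*m)/(m + δ*f) := by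
  refine div_nonneg ?_ hmδf
  rw [sub_eq_add_neg, ← neg_mul]
  exact add_nonneg (mul_nonneg hab hβ) (mul_nonneg (neg_nonneg.mpr hθ) hm)

end

theorem stmt_7 (a b δ f m β : ℝ) (hb : 0 < b) (hδ : 0 ≤ δ) (hf : 0 < f)
    (hm : 0 < m) (hβ : 0 < β) (hnpi : 2*m*f + δ*f^2 ≥ β)
    (hθ : a*f - b*m < 0) (ha : 0 ≤ a) :
    (0 ≤ a*β/m ∧ a*β/m ≤ (a + b*δ)*f + b*m) ∧
    (0 ≤ ((a + b*δ)*β - (a*f - b*m)*m)/(m + δ*f) ∧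
      ((a + b*δ)*β - (a*f - b*m)*m)/(m + δ*f) ≤ (a + b*δ)*f + b*m) := by
  have hab : 0 ≤ a + b*δ := by positivity
  have hmδf : 0 < m + δ*f := by positivity
  exact ⟨⟨by positivity, mul_div_le_of_sub_nonpos ha hm hmδf.le hθ.le hnpi⟩,
    ⟨div_nonneg_of_sub_nonpos hab hβ.le hm.le hmδf.le hθ.le,
      div_le_of_nonneg_coeff hab hmδf hnpi⟩⟩
end

section
/- Let f, m₁, δ, a, b, β be real numbers with f > 0, m₁ > δf ≥ 0, b > 0, a ≥ 0, β > 0, and 2m₁f − δf² ≥ β. Set θ = af − b(m₁ − δf). If θ ≥ 0, then 0 ≤ bβ/f ≤ af + bm₁ and 0 ≤ bβ/f + θ ≤ af + bm₁. If θ < 0, then 0 ≤ (a + bδ)β/m₁ ≤ af + bm₁ and 0 ≤ (aβ − θm₁)/(m₁ − δf) ≤ af + bm₁. -/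
/-!
The non-positivity condition says `β ≤ f (2m₁ - δf)`. Every upper bound is this inequality
multiplied by a nonnegative coefficient, rewritten with one of the identities
`(a + bδ) · f (2m₁ - δf) = m₁ (af + bm₁) + (m₁ - δf) θ` and
`a · f (2m₁ - δf) = (m₁ - δf)(af + bm₁) + m₁ θ`, where `θ = af - b(m₁ - δf)`;
the `θ`-term then has the right sign in each case.
-/

section

variable {K : Type*} [Field K] [LinearOrder K] [IsStrictOrderedRing K] {f m₁ δ a b β : K}

theorem div_le_two_mul_sub (hf : 0 < f) (hβ : β ≤ 2*m₁*f - δ*f^2) : β/f ≤ 2*m₁ - δ*f := by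
  rw [div_le_iff₀ hf]
  linarith

theorem mul_div_add_sub_le (hf : 0 < f) (hb : 0 ≤ b) (hβ : β ≤ 2*m₁*f - δ*f^2) :
    b*β/f + (a*f - b*(m₁ - δ*f)) ≤ a*f + b*m₁ := by
  have := mul_le_mul_of_nonneg_left (div_le_two_mul_sub hf hβ) hb
  rw [mul_div_assoc]
  linarith

theorem add_mul_mul_div_le (ha : 0 ≤ a) (hb : 0 ≤ b) (hδ : 0 ≤ δ) (hm₁ : 0 < m₁)
    (hd : 0 ≤ m₁ - δ*f) (hθ : a*f - b*(m₁ - δ*f) ≤ 0) (hβ : β ≤ 2*m₁*f - δ*f^2) :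
    (a + b*δ)*β/m₁ ≤ a*f + b*m₁ := by
  rw [div_le_iff₀ hm₁]
  calc (a + b*δ)*β ≤ (a + b*δ)*(2*m₁*f - δ*f^2) := by gcongr
    _ = (a*f + b*m₁)*m₁ + (m₁ - δ*f)*(a*f - b*(m₁ - δ*f)) := by ring
    _ ≤ (a*f + b*m₁)*m₁ := add_le_of_nonpos_right (mul_nonpos_of_nonneg_of_nonpos hd hθ)

theorem mul_sub_mul_div_le (ha : 0 ≤ a) (hd : 0 < m₁ - δ*f) (hβ : β ≤ 2*m₁*f - δ*f^2) :
    (a*β - (a*f - b*(m₁ - δ*f))*m₁)/(m₁ - δ*f) ≤ a*f + b*m₁ := by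
  rw [div_le_iff₀ hd]
  calc a*β - (a*f - b*(m₁ - δ*f))*m₁ ≤ a*(2*m₁*f - δ*f^2) - (a*f - b*(m₁ - δ*f))*m₁ := by
        gcongr
    _ = (a*f + b*m₁)*(m₁ - δ*f) := by ring

end

theorem stmt_14 (f m₁ δ a b β : ℝ) (hf : 0 < f) (hδ : 0 ≤ δ*f) (hm : δ*f < m₁)
    (hb : 0 < b) (ha : 0 ≤ a) (hβ : 0 < β)
    (hnpi : 2*m₁*f - δ*f^2 ≥ β) :
    (a*f - b*(m₁ - δ*f) ≥ 0 →
      (0 ≤ b*β/f ∧ b*β/f ≤ a*f + b*m₁) ∧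
      (0 ≤ b*β/f + (a*f - b*(m₁ - δ*f)) ∧
        b*β/f + (a*f - b*(m₁ - δ*f)) ≤ a*f + b*m₁)) ∧
    (a*f - b*(m₁ - δ*f) < 0 →
      (0 ≤ (a + b*δ)*β/m₁ ∧ (a + b*δ)*β/m₁ ≤ a*f + b*m₁) ∧
      (0 ≤ (a*β - (a*f - b*(m₁ - δ*f))*m₁)/(m₁ - δ*f) ∧
        (a*β - (a*f - b*(m₁ - δ*f))*m₁)/(m₁ - δ*f) ≤ a*f + b*m₁)) := by
  have hm₁ : 0 < m₁ := hδ.trans_lt hm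
  have hd : 0 < m₁ - δ*f := sub_pos.2 hm
  have hδ₀ : 0 ≤ δ := nonneg_of_mul_nonneg_left hδ hf
  have ht₅ : 0 ≤ b*β/f := by positivity
  refine ⟨fun hθ => ?_, fun hθ => ?_⟩
  · have ht₆ := mul_div_add_sub_le (a := a) hf hb.le hnpi
    exact ⟨⟨ht₅, by linarith⟩, ⟨by linarith, ht₆⟩⟩
  · have hnum : 0 ≤ a*β - (a*f - b*(m₁ - δ*f))*m₁ :=
      sub_nonneg.2 ((mul_nonpos_of_nonpos_of_nonneg hθ.le hm₁.le).trans (by positivity))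
    exact ⟨⟨by positivity, add_mul_mul_div_le ha hb.le hδ₀ hm₁ hd.le hθ.le hnpi⟩,
      ⟨div_nonneg hnum hd.le, mul_sub_mul_div_le ha hd hnpi⟩⟩
end

section
/- Let a, b, δ, f, m₁, v be real numbers with b > 0, a + bδ > 0, f > 0, m₁ > δf > 0 or (δ = 0 and m₁ > 0), v > 0. Then (af + bm₁)² = b(2a + δb)·v^{-1} together with 2m₁f − δf² ≥ v^{-1} holds if and only if 2m₁f − δf² = v^{-1} and af = b(m₁ − δf). -/
/-! Everything rests on the identity
`(a f + b m₁)² = b (2a + δb) (2 m₁ f - δ f²) + (a f - b (m₁ - δ f))²`.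
Once `b (2a + δb) > 0`, the hypotheses force `2 m₁ f - δ f² ≥ v⁻¹` to be an equality and the
square to vanish. That positivity holds because `(a f + b m₁)² = b (2a + δb) v⁻¹` makes `2a + δb`
non-negative, and `2a + δb = 0` would force `a f + b m₁ = 0`, hence `m₁ = δ f / 2`, contradicting
`m₁ > δ f ≥ 0`. -/

theorem eq_and_eq_zero_of_mul_add_sq_eq_mul {R : Type*} [CommRing R] [LinearOrder R]
    [IsStrictOrderedRing R] {c d q w : R} (hc : 0 < c) (h : c * q + d ^ 2 = c * w)
    (hwq : w ≤ q) : q = w ∧ d = 0 := by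
  have hcq : c * w ≤ c * q := mul_le_mul_of_nonneg_left hwq hc.le
  have hd : d ^ 2 = 0 := le_antisymm (by linarith) (sq_nonneg d)
  refine ⟨le_antisymm ?_ hwq, pow_eq_zero_iff two_ne_zero |>.1 hd⟩
  exact (mul_le_mul_iff_right₀ hc).1 (by linarith)

theorem sq_add_eq_mul_add_sq (a b δ f m : ℝ) :
    (a * f + b * m) ^ 2
      = b * (2 * a + δ * b) * (2 * m * f - δ * f ^ 2) + (a * f - b * (m - δ * f)) ^ 2 := by
  ring

theorem two_mul_add_pos_of_sq_eq_mul {a b δ f m w : ℝ} (hb : 0 < b) (hδf : 0 ≤ δ * f)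
    (hm : δ * f < m) (hw : 0 < w) (h : (a * f + b * m) ^ 2 = b * (2 * a + δ * b) * w) :
    0 < 2 * a + δ * b := by
  have hbw : 0 < b * w := mul_pos hb hw
  have hnonneg : 0 ≤ 2 * a + δ * b := by
    have : 0 ≤ (2 * a + δ * b) * (b * w) := by nlinarith [sq_nonneg (a * f + b * m)]
    exact nonneg_of_mul_nonneg_left this hbw
  refine hnonneg.lt_of_ne fun hzero => ?_
  have hsum : a * f + b * m = 0 := by
    rw [← hzero, mul_zero, zero_mul] at h
    exact pow_eq_zero_iff two_ne_zero |>.1 h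
  have : b * (2 * m - δ * f) = 0 := by linear_combination 2 * hsum + f * hzero
  exact (mul_pos hb (by linarith)).ne' this

theorem stmt_15_general (a b δ f m₁ v : ℝ) (hb : 0 < b)
    (hm : (m₁ > δ*f ∧ δ*f > 0) ∨ (δ = 0 ∧ m₁ > 0)) (hv : 0 < v) :
    ((a*f + b*m₁)^2 = b*(2*a + δ*b) * v⁻¹ ∧ 2*m₁*f - δ*f^2 ≥ v⁻¹) ↔
      (2*m₁*f - δ*f^2 = v⁻¹ ∧ a*f = b*(m₁ - δ*f)) := by
  obtain ⟨hδf, hmδ⟩ : 0 ≤ δ * f ∧ δ * f < m₁ := by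
    rcases hm with ⟨h₁, h₂⟩ | ⟨rfl, h₂⟩
    · exact ⟨h₂.le, h₁⟩
    · simpa using h₂
  constructor
  · rintro ⟨h, hge⟩
    have hc := mul_pos hb (two_mul_add_pos_of_sq_eq_mul hb hδf hmδ (inv_pos.2 hv) h)
    rw [sq_add_eq_mul_add_sq] at h
    obtain ⟨hQ, hd⟩ := eq_and_eq_zero_of_mul_add_sq_eq_mul hc h hge
    exact ⟨hQ, sub_eq_zero.1 hd⟩
  · rintro ⟨hQ, had⟩
    refine ⟨?_, hQ.ge⟩
    rw [sq_add_eq_mul_add_sq, hQ, sub_eq_zero.2 had]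
    ring

theorem stmt_15 (a b δ f m₁ v : ℝ) (hb : 0 < b) (habδ : 0 < a + b*δ)
    (hf : 0 < f) (hm : (m₁ > δ*f ∧ δ*f > 0) ∨ (δ = 0 ∧ m₁ > 0)) (hv : 0 < v) :
    ((a*f + b*m₁)^2 = b*(2*a + δ*b) * v⁻¹ ∧ 2*m₁*f - δ*f^2 ≥ v⁻¹) ↔
      (2*m₁*f - δ*f^2 = v⁻¹ ∧ a*f = b*(m₁ - δ*f)) :=
  stmt_15_general a b δ f m₁ v hb hm hv
end
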